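/- (Spread lower bound for a product of partially entangled pairs) Let |Ψ⟩ = (√(2/3)|00⟩ + √(1/3)|11⟩) and consider the product state |Ψ⟩^{⊗k} shared across a cut so that each pair is split between the two sides. The reduced density operator on side A has eigenvalues (2/3)^{k−j}(1/3)^j with multiplicity C(k,j) for j = 0,...,k. For any fixed δ ∈ (0, 1/2), the δ-smooth entanglement spread ES_δ(|Ψ⟩^{⊗k}) = S_max^δ − S_min^δ is at least c·√k for some constant c > 0 and all sufficiently large k. -/

import Mathlib

/-- δ-smooth max-entropy (base 2) of a spectrum indexed by a finite type. -/
noncomputable def smoothMax {ι : Type*} [Fintype ι] (lam : ι → ℝ) (δ : ℝ) : ℝ :=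
  sInf {x : ℝ | ∃ L : Finset ι, 1 - δ ≤ ∑ i ∈ L, lam i ∧ x = Real.logb 2 L.card}

/-- δ-smooth min-entropy (base 2) of a spectrum indexed by a finite type. -/
noncomputable def smoothMin {ι : Type*} [Fintype ι] (lam : ι → ℝ) (δ : ℝ) : ℝ :=
  - sInf {x : ℝ | ∃ L : Finset ι, ∃ h : L.Nonempty,
      1 - δ ≤ ∑ i ∈ L, lam i ∧ x = Real.logb 2 (L.sup' h lam)}

/-- The spectrum of the reduced state of `|Ψ⟩^{⊗k}` with
`|Ψ⟩ = √(2/3)|00⟩ + √(1/3)|11⟩`: the eigenvalue attached to the bit string `x` is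
`(2/3)^{k−|x|} (1/3)^{|x|}` where `|x|` is the Hamming weight. -/
noncomputable def pairSpectrum (k : ℕ) : (Fin k → Bool) → ℝ := fun x =>
  (2 / 3 : ℝ) ^ (k - (Finset.univ.filter (fun i => x i = true)).card)
    * (1 / 3 : ℝ) ^ ((Finset.univ.filter (fun i => x i = true)).card)

/-!
The eigenvalue of a bit string of Hamming weight `j` is `(2/3)^k 2^(-j)`, so ratios of eigenvalues
are powers of two in the difference of weights, and the weight is `Bin(k, 1/3)`-distributed.
Smoothing the min-entropy cannot discard every weight up to the `δ`-quantile `a`, and the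
max-entropy must still count mass `1/2 - δ` at weights beyond the median `b`; hence the spread is
at least `b - a + log₂ (1/2 - δ)`. Anti-concentration gives `b - a ≥ c √k`: the ratio
`P(j+1)/P(j) = (k-j)/(2(j+1))` shows that from any weight `j` there is a window of about `√k/5`
consecutive weights on one side of `j` where the binomial probabilities stay above `P(j)/2`, so
`P(j) = O(1/√k)`.
-/

open Finset Real Filter

theorem pow_mul_le_of_forall_mul_le {f : ℕ → ℝ} {r : ℝ} (hr : 0 ≤ r) {a : ℕ} :
    ∀ n, (∀ i ∈ Ico a (a + n), r * f i ≤ f (i + 1)) → r ^ n * f a ≤ f (a + n)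
  | 0, _ => by simp
  | n + 1, h => calc
      r ^ (n + 1) * f a = r * (r ^ n * f a) := by ring
      _ ≤ r * f (a + n) := by
        gcongr
        exact pow_mul_le_of_forall_mul_le hr n fun i hi ↦ h i (Ico_subset_Ico_right (by omega) hi)
      _ ≤ f (a + (n + 1)) := h (a + n) (by simp)

theorem sum_range_find_le {p : ℕ → ℝ} {α : ℝ} (hα : 0 ≤ α)
    (h : ∃ j, α < ∑ i ∈ range (j + 1), p i) : ∑ i ∈ range (Nat.find h), p i ≤ α := by
  rcases hfind : Nat.find h with _ | j
  · simpa using hα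
  · exact not_lt.1 (Nat.find_min h (hfind ▸ j.lt_succ_self))

theorem exists_quantile_gap {p : ℕ → ℝ} {M α β : ℝ} (hM : ∀ i, p i ≤ M) (hα : 0 ≤ α)
    (hαβ : α ≤ β) {n : ℕ} (hβ : β < ∑ i ∈ range n, p i) :
    ∃ a b : ℕ, α < ∑ i ∈ range (a + 1), p i ∧ ∑ i ∈ range b, p i ≤ β ∧
      β - α < ((b : ℝ) + 1 - a) * M := by
  have hn : n - 1 + 1 = n := Nat.sub_add_cancel <| Nat.pos_of_ne_zero fun h ↦ by
    simp only [h, range_zero, sum_empty] at hβ; linarith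
  have hB : ∃ j, β < ∑ i ∈ range (j + 1), p i := ⟨n - 1, hn ▸ hβ⟩
  have hA : ∃ j, α < ∑ i ∈ range (j + 1), p i := ⟨n - 1, hαβ.trans_lt (hn ▸ hβ)⟩
  have hab : Nat.find hA ≤ Nat.find hB := Nat.find_min' hA (hαβ.trans_lt (Nat.find_spec hB))
  refine ⟨Nat.find hA, Nat.find hB, Nat.find_spec hA, sum_range_find_le (hα.trans hαβ) hB, ?_⟩
  calc β - α < ∑ i ∈ range (Nat.find hB + 1), p i - ∑ i ∈ range (Nat.find hA), p i := by
        linarith [Nat.find_spec hB, sum_range_find_le hα hA]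
    _ = ∑ i ∈ Ico (Nat.find hA) (Nat.find hB + 1), p i := (sum_Ico_eq_sub p (by omega)).symm
    _ ≤ #(Ico (Nat.find hA) (Nat.find hB + 1)) • M := sum_le_card_nsmul _ _ _ fun i _ ↦ hM i
    _ = ((Nat.find hB : ℝ) + 1 - Nat.find hA) * M := by
        rw [Nat.card_Ico, nsmul_eq_mul, Nat.cast_sub (by omega)]
        push_cast; ring

section SmoothEntropy

variable {ι : Type*} [Fintype ι] {lam : ι → ℝ} {δ : ℝ}

theorem smoothMin_le_neg_logb {t : ℝ} (hlam : ∀ i, 0 ≤ lam i) (ht : 0 < t)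
    (htot : 1 - δ ≤ ∑ i, lam i) (htail : ∑ i with lam i < t, lam i < 1 - δ) :
    smoothMin lam δ ≤ -logb 2 t := by
  have hpos : 0 < ∑ i, lam i := by
    linarith [sum_nonneg fun i (_ : i ∈ univ.filter (lam · < t)) ↦ hlam i]
  rw [smoothMin, neg_le_neg_iff]
  refine le_csInf ⟨_, univ, nonempty_of_sum_ne_zero hpos.ne', htot, rfl⟩ ?_
  rintro _ ⟨L, hL, hmass, rfl⟩
  obtain ⟨i, hi, hti⟩ : ∃ i ∈ L, t ≤ lam i := by
    by_contra! hlt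
    have : ∑ i ∈ L, lam i ≤ ∑ i with lam i < t, lam i :=
      sum_le_sum_of_subset_of_nonneg (fun i hi ↦ by simpa using hlt i hi) fun i _ _ ↦ hlam i
    linarith
  exact logb_le_logb_of_le one_lt_two ht (hti.trans (le_sup' lam hi))

theorem logb_div_le_smoothMax {s ε : ℝ} (hlam : ∀ i, 0 ≤ lam i) (hs : 0 < s) (hε : 0 < ε)
    (htot : 1 - δ ≤ ∑ i, lam i) (hhead : ∑ i with s < lam i, lam i ≤ 1 - δ - ε) :
    logb 2 (ε / s) ≤ smoothMax lam δ := by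
  refine le_csInf ⟨_, univ, htot, rfl⟩ ?_
  rintro _ ⟨L, hmass, rfl⟩
  have hhigh : ∑ i ∈ L with s < lam i, lam i ≤ ∑ i with s < lam i, lam i :=
    sum_le_sum_of_subset_of_nonneg (filter_subset_filter _ (subset_univ L)) fun i _ _ ↦ hlam i
  have hlow : ∑ i ∈ L with ¬s < lam i, lam i ≤ #L • s := calc
    _ ≤ #(L.filter (¬s < lam ·)) • s := sum_le_card_nsmul _ _ _ fun i hi ↦ by
          simpa using (mem_filter.1 hi).2
    _ ≤ #L • s := by gcongr; exact filter_subset _ _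
  rw [← sum_filter_add_sum_filter_not L (s < lam ·)] at hmass
  rw [nsmul_eq_mul] at hlow
  exact logb_le_logb_of_le one_lt_two (by positivity) ((div_le_iff₀ hs).2 (by linarith))

end SmoothEntropy

noncomputable def pairEigenvalue (k j : ℕ) : ℝ := (2 / 3) ^ k * (1 / 2) ^ j

-- For `j ≤ k` this is `C(k,j) (2/3)^(k-j) (1/3)^j`; beyond `k` the binomial coefficient vanishes.
noncomputable def binomMass (k j : ℕ) : ℝ := k.choose j * pairEigenvalue k j

section BinomMass

variable {k : ℕ}

theorem pairEigenvalue_pos (k j : ℕ) : 0 < pairEigenvalue k j := by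
  unfold pairEigenvalue; positivity

theorem binomMass_nonneg (k j : ℕ) : 0 ≤ binomMass k j := by
  unfold binomMass; have := pairEigenvalue_pos k j; positivity

theorem sum_range_binomMass (k : ℕ) : ∑ j ∈ range (k + 1), binomMass k j = 1 := by
  have h := add_pow (1 / 2 : ℝ) 1 k
  simp only [one_pow, mul_one] at h
  calc ∑ j ∈ range (k + 1), binomMass k j = (2 / 3) ^ k * (1 / 2 + 1) ^ k := by
        rw [h, mul_sum]
        refine sum_congr rfl fun j _ ↦ ?_
        unfold binomMass pairEigenvalue; ring
    _ = 1 := by rw [← mul_pow]; norm_num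

theorem sum_binomMass_le_one (S : Finset ℕ) : ∑ j ∈ S, binomMass k j ≤ 1 := calc
  ∑ j ∈ S, binomMass k j = ∑ j ∈ S ∩ range (k + 1), binomMass k j := by
    refine (sum_subset inter_subset_left fun j hjS hj ↦ ?_).symm
    have : k < j := by simpa [hjS] using hj
    simp [binomMass, Nat.choose_eq_zero_of_lt this]
  _ ≤ ∑ j ∈ range (k + 1), binomMass k j :=
    sum_le_sum_of_subset_of_nonneg inter_subset_right fun j _ _ ↦ binomMass_nonneg k j
  _ = 1 := sum_range_binomMass k

theorem card_mul_le_one_of_le_binomMass {S : Finset ℕ} {c : ℝ} (h : ∀ j ∈ S, c ≤ binomMass k j) :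
    #S * c ≤ 1 := by
  simpa only [nsmul_eq_mul] using (card_nsmul_le_sum S _ c h).trans (sum_binomMass_le_one S)

theorem two_mul_succ_mul_binomMass_succ (k j : ℕ) :
    2 * (j + 1) * binomMass k (j + 1) = (k - j) * binomMass k j := by
  have hchoose : (k.choose (j + 1) : ℝ) * (j + 1) = k.choose j * (k - j) := by
    rcases le_or_gt j k with hjk | hkj
    · rw [← Nat.cast_sub hjk]; exact_mod_cast k.choose_succ_right_eq j
    · simp [Nat.choose_eq_zero_of_lt hkj, Nat.choose_eq_zero_of_lt (hkj.trans j.lt_succ_self)]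
  unfold binomMass pairEigenvalue
  linear_combination (2 / 3 : ℝ) ^ k * (1 / 2) ^ j * hchoose

theorem mul_binomMass_le_succ {j : ℕ} {r : ℝ} (h : r * (2 * (j + 1)) ≤ k - j) :
    r * binomMass k j ≤ binomMass k (j + 1) := by
  have hratio := two_mul_succ_mul_binomMass_succ k j
  have hj : (0 : ℝ) < 2 * (j + 1) := by positivity
  nlinarith [binomMass_nonneg k j]

theorem binomMass_succ_le {j : ℕ} (h : k ≤ 3 * j + 2) : binomMass k (j + 1) ≤ binomMass k j := by
  have hratio := two_mul_succ_mul_binomMass_succ k j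
  have h' : (k : ℝ) ≤ 3 * j + 2 := by exact_mod_cast h
  nlinarith [binomMass_nonneg k j, binomMass_nonneg k (j + 1)]

theorem binomMass_le_one (k j : ℕ) : binomMass k j ≤ 1 := by
  simpa using sum_binomMass_le_one (k := k) {j}

theorem one_sub_mul_binomMass_le_succ {w i : ℕ} (hw : 18 * w ^ 2 ≤ k) (hw0 : 0 < w)
    (hi : 3 * i + 3 ≤ k + 6 * w) : (1 - 9 * w / k) * binomMass k i ≤ binomMass k (i + 1) := by
  have hk : (0 : ℝ) < k := by norm_cast; nlinarith
  have hw' : 18 * (w : ℝ) ^ 2 ≤ k := by exact_mod_cast hw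
  have hi' : 3 * (i : ℝ) + 3 ≤ k + 6 * w := by exact_mod_cast hi
  refine mul_binomMass_le_succ ?_
  calc (1 - 9 * w / k : ℝ) * (2 * (i + 1)) = (k - 9 * w) * (2 * (i + 1)) / k := by field_simp
    _ ≤ k - i := by
      rw [div_le_iff₀ hk]
      rcases le_or_gt (3 * (i : ℝ) + 2) k with hik | hik <;> nlinarith

theorem binomMass_div_two_le_add {w j n : ℕ} (hw : 18 * w ^ 2 ≤ k) (hj : 3 * j ≤ k + 3 * w)
    (hn : n ≤ w) : binomMass k j / 2 ≤ binomMass k (j + n) := by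
  rcases Nat.eq_zero_or_pos w with rfl | hw0
  · obtain rfl : n = 0 := by omega
    simpa using half_le_self (binomMass_nonneg k j)
  have hk : (0 : ℝ) < k := by norm_cast; nlinarith
  have hw' : 18 * (w : ℝ) ^ 2 ≤ k := by exact_mod_cast hw
  have hd : 9 * (w : ℝ) / k ≤ 1 / 2 / w := by
    rw [div_le_div_iff₀ hk (by positivity)]; nlinarith
  have hd' : (n : ℝ) * (9 * w / k) ≤ 1 / 2 := calc
    (n : ℝ) * (9 * w / k) ≤ w * (1 / 2 / w) := by gcongr
    _ = 1 / 2 := by field_simp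
  have hd1 : 9 * (w : ℝ) / k ≤ 1 := hd.trans (by
    rw [div_div, div_le_one (by positivity)]; exact_mod_cast (by omega : 1 ≤ 2 * w))
  calc binomMass k j / 2 ≤ (1 + -(9 * w / k)) ^ n * binomMass k j := by
        have := one_add_mul_le_pow (a := -(9 * w / k : ℝ)) (by linarith) n
        nlinarith [binomMass_nonneg k j]
    _ ≤ binomMass k (j + n) := pow_mul_le_of_forall_mul_le (by linarith) n fun i hi ↦ by
        rw [← sub_eq_add_neg]
        exact one_sub_mul_binomMass_le_succ hw hw0 (by have := (mem_Ico.1 hi).2; omega)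

theorem binomMass_le_of_mem_Icc {w j i : ℕ} (hj : k + 3 * w < 3 * j) (hi : i ∈ Icc (j - w) j) :
    binomMass k j ≤ binomMass k i := by
  have hanti : AntitoneOn (binomMass k) (Set.Icc (j - w) j) :=
    antitoneOn_of_add_one_le Set.ordConnected_Icc fun i _ hi _ ↦
      binomMass_succ_le (by have := hi.1; omega)
  exact hanti (by simpa using hi) (by simp) (mem_Icc.1 hi).2

theorem succ_mul_binomMass_le_two {w : ℕ} (hw : 18 * w ^ 2 ≤ k) (j : ℕ) :
    (w + 1) * binomMass k j ≤ 2 := by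
  rcases le_or_gt (3 * j) (k + 3 * w) with hj | hj
  · have := card_mul_le_one_of_le_binomMass (S := Icc j (j + w)) fun i hi ↦ by
      obtain ⟨n, rfl⟩ : ∃ n, i = j + n := ⟨i - j, by have := (mem_Icc.1 hi).1; omega⟩
      exact binomMass_div_two_le_add hw hj (by simpa using (mem_Icc.1 hi).2)
    rw [Nat.card_Icc, show j + w + 1 - j = w + 1 by omega] at this
    push_cast at this
    linarith
  · have := card_mul_le_one_of_le_binomMass fun i ↦ binomMass_le_of_mem_Icc (w := w) hj
    rw [Nat.card_Icc, show j + 1 - (j - w) = w + 1 by omega] at this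
    push_cast at this
    linarith [binomMass_nonneg k j]

theorem binomMass_le_div_sqrt (hk : 0 < k) (j : ℕ) : binomMass k j ≤ 10 / √k := by
  set w := Nat.sqrt k / 5
  have hw : 18 * w ^ 2 ≤ k := by
    have := Nat.sqrt_le' k
    have : 5 * w ≤ Nat.sqrt k := Nat.mul_div_le _ _
    nlinarith
  have hsqrt : √k ≤ 5 * (w + 1) := by
    have h1 := Real.real_sqrt_lt_nat_sqrt_succ (a := k)
    have h2 : Nat.sqrt k + 1 ≤ 5 * (w + 1) := by omega
    have h3 : (Nat.sqrt k : ℝ) + 1 ≤ 5 * (w + 1) := by exact_mod_cast h2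
    linarith
  rw [le_div_iff₀ (by positivity)]
  nlinarith [succ_mul_binomMass_le_two hw j, binomMass_nonneg k j]

end BinomMass

def boolWeight {α : Type*} [Fintype α] (x : α → Bool) : ℕ := #{i | x i = true}

theorem boolWeight_le {α : Type*} [Fintype α] (x : α → Bool) : boolWeight x ≤ Fintype.card α :=
  card_filter_le _ _

theorem card_filter_boolWeight_eq {α : Type*} [Fintype α] [DecidableEq α] (m : ℕ) :
    #{x : α → Bool | boolWeight x = m} = (Fintype.card α).choose m := by
  rw [← card_univ, ← card_powersetCard]
  refine card_nbij' (fun x ↦ ({i | x i = true} : Finset α)) (fun s i ↦ decide (i ∈ s)) ?_ ?_ ?_ ?_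
  · intro x hx
    rw [mem_coe, mem_filter] at hx
    exact mem_powersetCard.2 ⟨subset_univ _, hx.2⟩
  · intro s hs
    rw [mem_coe, mem_powersetCard] at hs
    rw [mem_coe, mem_filter, boolWeight]
    simpa using hs.2
  · intro x _; funext i; simp
  · intro s _; ext i; simp

section PairSpectrum

variable {k : ℕ}

theorem pairSpectrum_eq (x : Fin k → Bool) :
    pairSpectrum k x = pairEigenvalue k (boolWeight x) := by
  have hw : boolWeight x ≤ k := by simpa using boolWeight_le x
  have hsplit : (2 / 3 : ℝ) ^ k = (2 / 3) ^ (k - boolWeight x) * (2 / 3) ^ boolWeight x := by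
    rw [← pow_add, Nat.sub_add_cancel hw]
  rw [pairEigenvalue, hsplit, mul_assoc, ← mul_pow]
  norm_num [pairSpectrum, boolWeight]

theorem pairEigenvalue_lt_iff {i j : ℕ} : pairEigenvalue k i < pairEigenvalue k j ↔ j < i := by
  unfold pairEigenvalue
  rw [mul_lt_mul_iff_right₀ (by positivity),
    pow_lt_pow_iff_right_of_lt_one₀ (by norm_num) (by norm_num)]

theorem logb_pairEigenvalue (k j : ℕ) : logb 2 (pairEigenvalue k j) = k * logb 2 (2 / 3) - j := by
  unfold pairEigenvalue
  rw [logb_mul (by positivity) (by positivity), logb_pow, logb_pow, one_div, logb_inv,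
    logb_self_eq_one one_lt_two]
  ring

theorem sum_pairSpectrum_filter_boolWeight_lt (j : ℕ) :
    ∑ x with boolWeight x < j, pairSpectrum k x = ∑ i ∈ range j, binomMass k i := by
  rw [← sum_fiberwise_of_maps_to (g := boolWeight) (t := range j) fun x hx ↦ by simpa using hx]
  refine sum_congr rfl fun i hi ↦ ?_
  have hfiber : univ.filter (fun x : Fin k → Bool ↦ boolWeight x < j ∧ boolWeight x = i) =
      univ.filter (boolWeight · = i) :=
    filter_congr fun x _ ↦ and_iff_right_of_imp fun h ↦ h ▸ mem_range.1 hi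
  rw [filter_filter, hfiber, sum_congr rfl fun x hx ↦ by rw [pairSpectrum_eq, (mem_filter.1 hx).2],
    sum_const, card_filter_boolWeight_eq, Fintype.card_fin, nsmul_eq_mul, binomMass]

theorem sum_pairSpectrum (k : ℕ) : ∑ x, pairSpectrum k x = 1 := by
  rw [← sum_range_binomMass k, ← sum_pairSpectrum_filter_boolWeight_lt, filter_true_of_mem]
  intro x _
  simpa [Nat.lt_succ_iff] using boolWeight_le x

theorem pairSpectrum_nonneg (x : Fin k → Bool) : 0 ≤ pairSpectrum k x :=
  pairSpectrum_eq x ▸ (pairEigenvalue_pos k _).le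

theorem sum_pairSpectrum_filter_gt (b : ℕ) :
    ∑ x with pairEigenvalue k b < pairSpectrum k x, pairSpectrum k x =
      ∑ i ∈ range b, binomMass k i := by
  rw [← sum_pairSpectrum_filter_boolWeight_lt]
  congr 1
  exact filter_congr fun x _ ↦ by rw [pairSpectrum_eq, pairEigenvalue_lt_iff]

theorem sum_pairSpectrum_filter_lt (a : ℕ) :
    ∑ x with pairSpectrum k x < pairEigenvalue k a, pairSpectrum k x =
      1 - ∑ i ∈ range (a + 1), binomMass k i := by
  rw [← sum_pairSpectrum k, ← sum_pairSpectrum_filter_boolWeight_lt,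
    ← sum_filter_not_add_sum_filter univ (boolWeight · < a + 1), add_sub_cancel_right]
  congr 1
  exact filter_congr fun x _ ↦ by
    rw [pairSpectrum_eq, pairEigenvalue_lt_iff, Nat.lt_succ_iff, not_le]

end PairSpectrum

theorem logb_add_sqrt_lt_spread {k : ℕ} (hk : 0 < k) {δ : ℝ} (hδ0 : 0 < δ) (hδ1 : δ < 1 / 2) :
    logb 2 (1 / 2 - δ) + (1 / 2 - δ) * √k / 10 - 1 <
      smoothMax (pairSpectrum k) δ - smoothMin (pairSpectrum k) δ := by
  have hε : 0 < 1 / 2 - δ := by linarith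
  have htot : 1 - δ ≤ ∑ x, pairSpectrum k x := by rw [sum_pairSpectrum]; linarith
  obtain ⟨a, b, ha, hb, hgap⟩ := exists_quantile_gap (binomMass_le_div_sqrt hk) hδ0.le hδ1.le
    (by rw [sum_range_binomMass]; norm_num : (1 / 2 : ℝ) < ∑ i ∈ range (k + 1), binomMass k i)
  have hmin : smoothMin (pairSpectrum k) δ ≤ -logb 2 (pairEigenvalue k a) :=
    smoothMin_le_neg_logb pairSpectrum_nonneg (pairEigenvalue_pos k a) htot
      (by rw [sum_pairSpectrum_filter_lt]; linarith)
  have hmax : logb 2 ((1 / 2 - δ) / pairEigenvalue k b) ≤ smoothMax (pairSpectrum k) δ :=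
    logb_div_le_smoothMax pairSpectrum_nonneg (pairEigenvalue_pos k b) hε htot
      (by rw [sum_pairSpectrum_filter_gt]; linarith)
  rw [logb_div hε.ne' (pairEigenvalue_pos k b).ne', logb_pairEigenvalue] at hmax
  rw [logb_pairEigenvalue] at hmin
  have hsqrt : (0 : ℝ) < √k := by positivity
  have : (1 / 2 - δ) * √k / 10 < b + 1 - a := by
    rw [mul_div_assoc', lt_div_iff₀ hsqrt] at hgap
    linarith
  linarith

/-- Spread lower bound for a product of partially entangled pairs:
for any fixed `δ ∈ (0, 1/2)` there is a constant `c > 0` such that for all sufficiently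
large `k`, the δ-smooth entanglement spread of `|Ψ⟩^{⊗k}` is at least `c·√k`. -/
theorem stmt_12 (δ : ℝ) (hδ0 : 0 < δ) (hδ1 : δ < 1 / 2) :
    ∃ c : ℝ, 0 < c ∧ ∃ N : ℕ, ∀ k ≥ N,
      c * Real.sqrt k ≤ smoothMax (pairSpectrum k) δ - smoothMin (pairSpectrum k) δ := by
  have hε : 0 < 1 / 2 - δ := by linarith
  have hlarge : ∀ᶠ k : ℕ in atTop, 0 < k ∧ 1 - logb 2 (1 / 2 - δ) ≤ (1 / 2 - δ) / 20 * √k :=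
    (eventually_gt_atTop 0).and <| ((tendsto_sqrt_atTop.comp tendsto_natCast_atTop_atTop)
      |>.const_mul_atTop (by positivity)).eventually_ge_atTop _
  obtain ⟨N, hN⟩ := eventually_atTop.1 hlarge
  refine ⟨(1 / 2 - δ) / 20, by positivity, N, fun k hk ↦ ?_⟩
  have := logb_add_sqrt_lt_spread (hN k hk).1 hδ0 hδ1
  linarith [(hN k hk).2]
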